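/- The function F(h) = \sum_{n \in \Z} (1 - 4h^2 n^2) exp(-2 h^2 n^2) (for h > 0) satisfies F(h) \to 1 as h \to \infty and F(h) \to 0 as h \to 0^+. -/

import Mathlib

open Filter

/-- The distribution function of the maximum of a three-dimensional Bessel bridge
of duration 1. -/
noncomputable def besselBridgeMaxCDF (h : ℝ) : ℝ :=
  ∑' n : ℤ, (1 - 4 * h ^ 2 * (n : ℝ) ^ 2) * Real.exp (-2 * h ^ 2 * (n : ℝ) ^ 2)

/-!
With `t = 2h²` the series is `θ(t) + 2tθ'(t)` for the theta series `θ(t) = ∑ exp(-tn²)`.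
As `t → ∞` every term but `n = 0` dies, under a Gaussian domination. As `t → 0⁺`, differentiating
the Jacobi transformation `√t θ(t) = √π θ(π²/t)` rewrites the series as
`2π²√(πt)/t² · ∑ n² exp(-π²n²/t)`, which is `O(t⁻² exp(-π²/t))`.
-/

open Real Topology Set

noncomputable def theta (t : ℝ) : ℝ := ∑' n : ℤ, exp (-(t * n ^ 2))

noncomputable def thetaMoment (t : ℝ) : ℝ := ∑' n : ℤ, (n : ℝ) ^ 2 * exp (-(t * n ^ 2))

noncomputable def maxCDFSeries (t : ℝ) : ℝ := ∑' n : ℤ, (1 - 2 * (t * n ^ 2)) * exp (-(t * n ^ 2))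

lemma besselBridgeMaxCDF_eq_maxCDFSeries (h : ℝ) :
    besselBridgeMaxCDF h = maxCDFSeries (2 * h ^ 2) := by
  rw [besselBridgeMaxCDF, maxCDFSeries]
  congr 1 with n
  ring_nf

lemma summable_abs_pow_mul_exp_neg_mul_sq (k : ℕ) {c : ℝ} (hc : 0 < c) :
    Summable fun n : ℤ => |(n : ℝ)| ^ k * exp (-(c * n ^ 2)) := by
  convert summable_pow_mul_jacobiTheta₂_term_bound 0 (div_pos hc pi_pos) k using 3 with n
  · push_cast
    rfl
  · congr 1
    field_simp
    ring

lemma summable_exp_neg_mul_sq {c : ℝ} (hc : 0 < c) :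
    Summable fun n : ℤ => exp (-(c * n ^ 2)) := by
  simpa using summable_abs_pow_mul_exp_neg_mul_sq 0 hc

lemma summable_sq_mul_exp_neg_mul_sq {c : ℝ} (hc : 0 < c) :
    Summable fun n : ℤ => (n : ℝ) ^ 2 * exp (-(c * n ^ 2)) := by
  simpa using summable_abs_pow_mul_exp_neg_mul_sq 2 hc

lemma hasDerivAt_theta {t : ℝ} (ht : 0 < t) : HasDerivAt theta (-thetaMoment t) t := by
  have hderiv (n : ℤ) (y : ℝ) :
      HasDerivAt (fun y => exp (-(y * n ^ 2))) (-((n : ℝ) ^ 2 * exp (-(y * n ^ 2)))) y := by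
    simpa [mul_comm] using ((hasDerivAt_id y).mul_const ((n : ℝ) ^ 2)).neg.exp
  have hbound (n : ℤ) (y : ℝ) (hy : y ∈ Ioi (t / 2)) :
      ‖-((n : ℝ) ^ 2 * exp (-(y * n ^ 2)))‖ ≤ (n : ℝ) ^ 2 * exp (-(t / 2 * n ^ 2)) := by
    rw [norm_neg, norm_of_nonneg (by positivity)]
    gcongr
    exact hy.le
  rw [thetaMoment, ← tsum_neg]
  exact hasDerivAt_tsum_of_isPreconnected (summable_sq_mul_exp_neg_mul_sq (half_pos ht))
    isOpen_Ioi isPreconnected_Ioi (fun n y _ => hderiv n y) hbound (half_lt_self ht)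
    (summable_exp_neg_mul_sq ht) (half_lt_self ht)

lemma sqrt_mul_theta {t : ℝ} (ht : 0 < t) : √t * theta t = √π * theta (π ^ 2 / t) := by
  have h := Real.tsum_exp_neg_mul_int_sq (div_pos ht pi_pos)
  have e1 : ∀ n : ℤ, -π * (t / π) * (n : ℝ) ^ 2 = -(t * n ^ 2) := fun n => by
    field_simp
  have e2 : ∀ n : ℤ, -π / (t / π) * (n : ℝ) ^ 2 = -(π ^ 2 / t * n ^ 2) := fun n => by
    field_simp
  simp only [e1, e2, ← sqrt_eq_rpow, sqrt_div ht.le] at h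
  rw [theta, theta, h]
  have : 0 < √t := sqrt_pos.2 ht
  have : 0 < √π := sqrt_pos.2 pi_pos
  field_simp

lemma maxCDFSeries_eq {t : ℝ} (ht : 0 < t) :
    maxCDFSeries t = theta t - 2 * t * thetaMoment t := by
  rw [maxCDFSeries, theta, thetaMoment, ← tsum_mul_left,
    ← (summable_exp_neg_mul_sq ht).tsum_sub ((summable_sq_mul_exp_neg_mul_sq ht).mul_left _)]
  congr 1 with n
  ring

-- Differentiate `sqrt_mul_theta`: the left side has derivative `maxCDFSeries t / (2 * √t)`.
lemma maxCDFSeries_eq_thetaMoment {t : ℝ} (ht : 0 < t) :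
    maxCDFSeries t = 2 * π ^ 2 * √π * √t / t ^ 2 * thetaMoment (π ^ 2 / t) := by
  have hL := (hasDerivAt_sqrt ht.ne').mul (hasDerivAt_theta ht)
  have hinv : HasDerivAt (fun t => π ^ 2 / t) (-(π ^ 2) / t ^ 2) t := by
    simpa [div_eq_mul_inv, neg_div] using (hasDerivAt_inv ht.ne').const_mul (π ^ 2)
  have hR := ((hasDerivAt_theta (div_pos (pow_pos pi_pos 2) ht)).comp t hinv).const_mul √π
  have heq : (fun t => √t * theta t) =ᶠ[𝓝 t] fun t => √π * theta (π ^ 2 / t) :=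
    eventually_of_mem (Ioi_mem_nhds ht) fun s hs => sqrt_mul_theta hs
  have hderiv := hL.unique (hR.congr_of_eventuallyEq heq)
  have hsq : √t ^ 2 = t := sq_sqrt ht.le
  rw [maxCDFSeries_eq ht]
  field_simp at hderiv ⊢
  rw [hsq] at hderiv
  linear_combination hderiv

lemma one_le_intCast_sq {n : ℤ} (hn : n ≠ 0) : (1 : ℝ) ≤ (n : ℝ) ^ 2 := by
  have h := Int.one_le_abs hn
  rw [← sq_abs, ← Int.cast_abs]
  exact one_le_pow₀ (by exact_mod_cast h)

lemma thetaMoment_le {s : ℝ} (hs : 1 ≤ s) : thetaMoment s ≤ exp (1 - s) * thetaMoment 1 := by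
  rw [thetaMoment, thetaMoment, ← tsum_mul_left]
  refine (summable_sq_mul_exp_neg_mul_sq (by linarith)).tsum_le_tsum (fun n => ?_)
    ((summable_sq_mul_exp_neg_mul_sq one_pos).mul_left _)
  rcases eq_or_ne n 0 with rfl | hn
  · simp
  have hn2 := one_le_intCast_sq hn
  rw [mul_left_comm, ← exp_add]
  gcongr
  nlinarith

lemma tendsto_maxCDFSeries_nhdsGT_zero : Tendsto maxCDFSeries (𝓝[>] 0) (𝓝 0) := by
  set C := 2 * √π * exp 1 * thetaMoment 1 / π ^ 2 with hC
  have hlim : Tendsto (fun t => C * ((π ^ 2 / t) ^ 2 * exp (-(π ^ 2 / t)))) (𝓝[>] 0) (𝓝 0) := by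
    simpa [div_eq_mul_inv] using ((tendsto_pow_mul_exp_neg_atTop_nhds_zero 2).comp
      (tendsto_inv_nhdsGT_zero.const_mul_atTop (pow_pos pi_pos 2))).const_mul C
  refine squeeze_zero_norm' ?_ hlim
  filter_upwards [Ioc_mem_nhdsGT one_pos] with t ⟨ht0, ht1⟩
  have hs : 1 ≤ π ^ 2 / t := by
    rw [le_div_iff₀ ht0]; nlinarith [pi_gt_three]
  have hS := thetaMoment_le hs
  have hS0 : 0 ≤ thetaMoment (π ^ 2 / t) := tsum_nonneg fun n => by positivity
  rw [maxCDFSeries_eq_thetaMoment ht0, norm_of_nonneg (by positivity)]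
  calc 2 * π ^ 2 * √π * √t / t ^ 2 * thetaMoment (π ^ 2 / t)
      ≤ 2 * π ^ 2 * √π / t ^ 2 * (exp (1 - π ^ 2 / t) * thetaMoment 1) := by
        rw [mul_div_right_comm _ √t]
        gcongr
        exact mul_le_of_le_one_right (by positivity) (sqrt_le_one.2 ht1)
    _ = C * ((π ^ 2 / t) ^ 2 * exp (-(π ^ 2 / t))) := by
        rw [hC, sub_eq_add_neg, exp_add]
        field_simp

lemma abs_one_sub_two_mul_mul_exp_neg_le {x : ℝ} (hx : 0 ≤ x) :
    |(1 - 2 * x) * exp (-x)| ≤ 4 * exp (-(x / 2)) := by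
  have hexp : 1 + x / 2 ≤ exp (x / 2) := by linarith [add_one_le_exp (x / 2)]
  calc |(1 - 2 * x) * exp (-x)| = |1 - 2 * x| * exp (-(x / 2)) * exp (-(x / 2)) := by
        rw [abs_mul, abs_exp, mul_assoc, ← exp_add, ← neg_add, add_halves]
    _ ≤ 4 * exp (x / 2) * exp (-(x / 2)) * exp (-(x / 2)) := by
        gcongr
        rw [abs_le]
        constructor <;> linarith
    _ = 4 * exp (-(x / 2)) := by
        rw [mul_assoc 4, ← exp_add, add_neg_cancel, exp_zero, mul_one]

lemma tendsto_one_sub_two_mul_mul_exp_neg_atTop :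
    Tendsto (fun x => (1 - 2 * x) * exp (-x)) atTop (𝓝 0) := by
  have h := tendsto_exp_neg_atTop_nhds_zero.sub
    ((tendsto_pow_mul_exp_neg_atTop_nhds_zero 1).const_mul 2)
  simp only [pow_one, mul_zero, sub_zero] at h
  refine h.congr fun x => ?_
  ring

lemma tendsto_maxCDFSeries_atTop : Tendsto maxCDFSeries atTop (𝓝 1) := by
  have hterm (n : ℤ) : Tendsto (fun t => (1 - 2 * (t * n ^ 2)) * exp (-(t * n ^ 2))) atTop
      (𝓝 (if n = 0 then 1 else 0)) := by
    rcases eq_or_ne n 0 with rfl | hn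
    · simp
    rw [if_neg hn]
    exact tendsto_one_sub_two_mul_mul_exp_neg_atTop.comp
      (tendsto_id.atTop_mul_const (by positivity))
  have hbound : ∀ᶠ t in atTop, ∀ n : ℤ,
      ‖(1 - 2 * (t * n ^ 2)) * exp (-(t * n ^ 2))‖ ≤ 4 * exp (-(1 / 2 * (n : ℝ) ^ 2)) := by
    filter_upwards [eventually_ge_atTop 1] with t ht n
    refine (abs_one_sub_two_mul_mul_exp_neg_le (by positivity)).trans ?_
    gcongr
    nlinarith [sq_nonneg (n : ℝ)]
  have h := tendsto_tsum_of_dominated_convergence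
    ((summable_exp_neg_mul_sq one_half_pos).mul_left 4) hterm hbound
  rwa [tsum_ite_eq] at h

theorem besselBridgeMaxCDF_limits :
    Tendsto besselBridgeMaxCDF atTop (nhds 1) ∧
      Tendsto besselBridgeMaxCDF (nhdsWithin 0 (Set.Ioi 0)) (nhds 0) := by
  have hF : besselBridgeMaxCDF = maxCDFSeries ∘ fun h => 2 * h ^ 2 :=
    funext besselBridgeMaxCDF_eq_maxCDFSeries
  have hsq : Tendsto (fun h : ℝ => 2 * h ^ 2) (𝓝[>] 0) (𝓝[>] 0) := by
    refine tendsto_nhdsWithin_iff.2 ⟨?_, eventually_mem_nhdsWithin.mono fun h hh => ?_⟩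
    · exact (Continuous.tendsto' (by fun_prop) 0 0 (by simp)).mono_left nhdsWithin_le_nhds
    · exact mul_pos two_pos (pow_pos (mem_Ioi.1 hh) 2)
  rw [hF]
  exact ⟨tendsto_maxCDFSeries_atTop.comp
      ((tendsto_pow_atTop two_ne_zero).const_mul_atTop two_pos),
    tendsto_maxCDFSeries_nhdsGT_zero.comp hsq⟩
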